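/- arXiv:1711.01086 — 2 statements merged into one kernel-verified Lean document; each statement's English description precedes it below -/
import Mathlib

section
/- Let G be a nontrivial connected graph. Then the dominating partition dimension η_p(G) equals 2 if and only if G is isomorphic to K_2. -/
open SimpleGraph Set

/-- Distance from a vertex to a set of vertices. -/
noncomputable def pDist {V : Type*} (G : SimpleGraph V) (v : V) (S : Set V) : ℕ :=
  sInf (G.dist v '' S)

/-- A family of sets of vertices is resolving if every pair of distinct vertices
is distinguished by its distance to some part. -/
def IsResolvingFam {V : Type*} (G : SimpleGraph V) (P : Set (Set V)) : Prop :=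
  ∀ u v : V, u ≠ v → ∃ S ∈ P, pDist G u S ≠ pDist G v S

/-- A family of sets is dominating if every vertex is at distance exactly 1 from some part. -/
def IsDominatingFam {V : Type*} (G : SimpleGraph V) (P : Set (Set V)) : Prop :=
  ∀ v : V, ∃ S ∈ P, pDist G v S = 1

/-- The partition domination number: minimum cardinality of a dominating partition. -/
noncomputable def gammaP {V : Type*} (G : SimpleGraph V) : ℕ :=
  sInf {k | ∃ P : Set (Set V), Setoid.IsPartition P ∧ IsDominatingFam G P ∧ P.ncard = k}

/-- The partition dimension: minimum cardinality of a resolving partition. -/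
noncomputable def betaP {V : Type*} (G : SimpleGraph V) : ℕ :=
  sInf {k | ∃ P : Set (Set V), Setoid.IsPartition P ∧ IsResolvingFam G P ∧ P.ncard = k}

/-- The dominating partition dimension: minimum cardinality of a resolving dominating partition. -/
noncomputable def etaP {V : Type*} (G : SimpleGraph V) : ℕ :=
  sInf {k | ∃ P : Set (Set V), Setoid.IsPartition P ∧ IsResolvingFam G P ∧
    IsDominatingFam G P ∧ P.ncard = k}

/-- A resolving set of vertices. -/
def IsResolvingSet {V : Type*} (G : SimpleGraph V) (S : Set V) : Prop :=
  ∀ u v : V, u ≠ v → ∃ x ∈ S, G.dist u x ≠ G.dist v x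

/-- A dominating set of vertices. -/
def IsDominatingSet {V : Type*} (G : SimpleGraph V) (S : Set V) : Prop :=
  ∀ v : V, v ∉ S → ∃ u ∈ S, G.Adj u v

/-- The resolving domination number η(G). -/
noncomputable def etaNum {V : Type*} (G : SimpleGraph V) : ℕ :=
  sInf {k | ∃ S : Set V, IsResolvingSet G S ∧ IsDominatingSet G S ∧ S.ncard = k}

/-- A twin set: pairwise twin vertices. -/
def IsTwinSet {V : Type*} (G : SimpleGraph V) (W : Set V) : Prop :=
  ∀ u ∈ W, ∀ v ∈ W, ∀ w : V, w ≠ u → w ≠ v → G.dist u w = G.dist v w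

/-- The join of two graphs. -/
def gJoin {α β : Type*} (G : SimpleGraph α) (H : SimpleGraph β) : SimpleGraph (α ⊕ β) :=
  SimpleGraph.fromRel (fun x y =>
    (∃ a b, x = Sum.inl a ∧ y = Sum.inl b ∧ G.Adj a b) ∨
    (∃ a b, x = Sum.inr a ∧ y = Sum.inr b ∧ H.Adj a b) ∨
    (∃ a b, x = Sum.inl a ∧ y = Sum.inr b))

/-- The disjoint union of two graphs. -/
def gUnion {α β : Type*} (G : SimpleGraph α) (H : SimpleGraph β) : SimpleGraph (α ⊕ β) :=
  SimpleGraph.fromRel (fun x y =>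
    (∃ a b, x = Sum.inl a ∧ y = Sum.inl b ∧ G.Adj a b) ∨
    (∃ a b, x = Sum.inr a ∧ y = Sum.inr b ∧ H.Adj a b))

lemma pDist_eq_zero_of_mem {V : Type*} (G : SimpleGraph V) {v : V} {S : Set V}
    (h : v ∈ S) : pDist G v S = 0 :=
  Nat.sInf_eq_zero.2 (Or.inl ⟨v, h, SimpleGraph.dist_self⟩)

lemma pDist_singleton {V : Type*} (G : SimpleGraph V) (v u : V) :
    pDist G v {u} = G.dist v u := by
  simp [pDist]

lemma etaP_eq_two_of {V : Type*} [Fintype V] (G : SimpleGraph V) {a b : V}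
    (hab : a ≠ b) (hall : ∀ v : V, v = a ∨ v = b) (hadj : G.Adj a b) :
    etaP G = 2 := by
  have hd1 : G.dist a b = 1 := SimpleGraph.dist_eq_one_iff_adj.2 hadj
  have hd2 : G.dist b a = 1 := SimpleGraph.dist_eq_one_iff_adj.2 hadj.symm
  have hsne : ({a} : Set V) ≠ {b} := by simpa using hab
  have hmem : 2 ∈ {k | ∃ P : Set (Set V), Setoid.IsPartition P ∧ IsResolvingFam G P ∧
      IsDominatingFam G P ∧ P.ncard = k} := by
    refine ⟨{{a}, {b}}, ⟨?_, ?_⟩, ?_, ?_, Set.ncard_pair hsne⟩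
    · intro h
      rcases h with h | h
      · exact (Set.singleton_ne_empty a) h.symm
      · exact (Set.singleton_ne_empty b) (by simpa using h.symm)
    · intro v
      rcases hall v with rfl | rfl
      · refine ⟨{v}, ⟨Or.inl rfl, rfl⟩, ?_⟩
        rintro T ⟨hT, hvT⟩
        simp only [Set.mem_insert_iff, Set.mem_singleton_iff] at hT
        rcases hT with rfl | rfl
        · rfl
        · exact absurd (by simpa using hvT) hab
      · refine ⟨{v}, ⟨Or.inr rfl, rfl⟩, ?_⟩
        rintro T ⟨hT, hvT⟩
        simp only [Set.mem_insert_iff, Set.mem_singleton_iff] at hT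
        rcases hT with rfl | rfl
        · exact absurd (by simpa using hvT) (Ne.symm hab)
        · rfl
    · intro u v huv
      refine ⟨{a}, Or.inl rfl, ?_⟩
      rw [pDist_singleton, pDist_singleton]
      rcases hall u with rfl | rfl <;> rcases hall v with rfl | rfl
      · exact absurd rfl huv
      · rw [SimpleGraph.dist_self, hd2]; norm_num
      · rw [hd2, SimpleGraph.dist_self]; norm_num
      · exact absurd rfl huv
    · intro v
      rcases hall v with rfl | rfl
      · exact ⟨{b}, Or.inr rfl, by rw [pDist_singleton]; exact hd1⟩
      · exact ⟨{a}, Or.inl rfl, by rw [pDist_singleton]; exact hd2⟩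
  refine le_antisymm (Nat.sInf_le hmem) (le_csInf ⟨2, hmem⟩ ?_)
  rintro k ⟨P, hpart, _, hdom, hcard⟩
  by_contra hk
  push_neg at hk
  interval_cases k
  · have hPfin : P.Finite := Set.toFinite P
    rw [Set.ncard_eq_zero hPfin] at hcard
    obtain ⟨S, hS, -⟩ := (hpart.2 a).exists
    simp [hcard] at hS
  · obtain ⟨S, rfl⟩ := Set.ncard_eq_one.1 hcard
    obtain ⟨T, hTP, haT⟩ := (hpart.2 a).exists
    obtain ⟨T', hT'P, hT'⟩ := hdom a
    rw [Set.mem_singleton_iff] at hTP hT'P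
    subst hTP; subst hT'P
    rw [pDist_eq_zero_of_mem G haT] at hT'
    exact absurd hT' (by norm_num)

lemma exists_of_etaP_two {V : Type*} [Fintype V] (G : SimpleGraph V)
    (h : etaP G = 2) :
    ∃ a b : V, a ≠ b ∧ (∀ v : V, v = a ∨ v = b) ∧ G.Adj a b := by
  have hne : {k | ∃ P : Set (Set V), Setoid.IsPartition P ∧ IsResolvingFam G P ∧
      IsDominatingFam G P ∧ P.ncard = k}.Nonempty := by
    by_contra h'
    rw [Set.not_nonempty_iff_eq_empty] at h'
    rw [etaP, h', Nat.sInf_empty] at h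
    simp at h
  have hmem := Nat.sInf_mem hne
  have h2 : sInf {k | ∃ P : Set (Set V), Setoid.IsPartition P ∧ IsResolvingFam G P ∧
      IsDominatingFam G P ∧ P.ncard = k} = 2 := h
  rw [h2] at hmem
  obtain ⟨P, hpart, hres, hdom, hcard⟩ := hmem
  obtain ⟨S, S', hSS', rfl⟩ := Set.ncard_eq_two.1 hcard
  have key2 : ∀ (x : V) (A B : Set V), A ∈ ({S, S'} : Set (Set V)) →
      B ∈ ({S, S'} : Set (Set V)) → x ∈ A → x ∈ B → A = B := by
    intro x A B hA hB hxA hxB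
    obtain ⟨C, -, hu⟩ := hpart.2 x
    exact (hu A ⟨hA, hxA⟩).trans (hu B ⟨hB, hxB⟩).symm
  -- key: distance to a part not containing w is 1
  have keyA : ∀ (w : V) (T : Set V), T ∈ ({S, S'} : Set (Set V)) → w ∉ T →
      pDist G w T = 1 := by
    intro w T hT hwT
    obtain ⟨T0, ⟨hT0P, hwT0⟩, -⟩ := hpart.2 w
    obtain ⟨T1, hT1P, hT1⟩ := hdom w
    have h0 : pDist G w T0 = 0 := pDist_eq_zero_of_mem G hwT0
    have hT0ne : T ≠ T0 := fun hh => hwT (hh ▸ hwT0)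
    have hT1ne : T1 ≠ T0 := fun hh => by rw [hh, h0] at hT1; exact absurd hT1 (by norm_num)
    have hT' : T = S ∨ T = S' := by simpa using hT
    have hT1P' : T1 = S ∨ T1 = S' := by simpa using hT1P
    have hT0P' : T0 = S ∨ T0 = S' := by simpa using hT0P
    have hTT1 : T = T1 := by
      rcases hT' with h1 | h1 <;> rcases hT1P' with h2 | h2 <;>
        rcases hT0P' with h3 | h3 <;> simp_all
    rw [hTT1]; exact hT1
  -- parts nonempty
  have hSne : S.Nonempty := by
    rcases Set.eq_empty_or_nonempty S with rfl | h'
    · exact absurd (Or.inl rfl) hpart.1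
    · exact h'
  have hS'ne : S'.Nonempty := by
    rcases Set.eq_empty_or_nonempty S' with rfl | h'
    · exact absurd (Or.inr rfl) hpart.1
    · exact h'
  obtain ⟨a, haS⟩ := hSne
  obtain ⟨b, hbS'⟩ := hS'ne
  have hab : a ≠ b := fun hh =>
    hSS' (key2 a S S' (Or.inl rfl) (Or.inr rfl) haS (hh ▸ hbS'))
  -- any two vertices in the same part are equal
  have hsame : ∀ (u v : V) (T : Set V), T ∈ ({S, S'} : Set (Set V)) →
      u ∈ T → v ∈ T → u = v := by
    intro u v T hT huT hvT
    by_contra huv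
    obtain ⟨T', hT'P, hne'⟩ := hres u v huv
    apply hne'
    by_cases hmemu : u ∈ T'
    · have hmemv : v ∈ T' := (key2 u T T' hT hT'P huT hmemu) ▸ hvT
      rw [pDist_eq_zero_of_mem G hmemu, pDist_eq_zero_of_mem G hmemv]
    · have hmemv : v ∉ T' := fun hvT' =>
        hmemu ((key2 v T T' hT hT'P hvT hvT') ▸ huT)
      rw [keyA u T' hT'P hmemu, keyA v T' hT'P hmemv]
  have hall : ∀ v : V, v = a ∨ v = b := by
    intro v
    obtain ⟨T0, ⟨hT0P, hvT0⟩, -⟩ := hpart.2 v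
    have hT0P' : T0 = S ∨ T0 = S' := by simpa using hT0P
    rcases hT0P' with h | h
    · exact Or.inl (hsame v a T0 hT0P hvT0 (by rw [h]; exact haS))
    · exact Or.inr (hsame v b T0 hT0P hvT0 (by rw [h]; exact hbS'))
  -- adjacency
  have hbnS : b ∉ S := fun hh =>
    hSS' (key2 b S S' (Or.inl rfl) (Or.inr rfl) hh hbS')
  have hSsing : S = {a} := by
    apply Set.eq_singleton_iff_unique_mem.2 ⟨haS, ?_⟩
    intro x hx
    rcases hall x with rfl | rfl
    · rfl
    · exact absurd hx hbnS
  have hkey := keyA b S (Or.inl rfl) hbnS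
  rw [hSsing, pDist_singleton] at hkey
  exact ⟨a, b, hab, hall, (SimpleGraph.dist_eq_one_iff_adj.1 hkey).symm⟩

theorem stmt_1 {V : Type*} [Fintype V] (G : SimpleGraph V) (hG : G.Connected)
    (hn : 2 ≤ Fintype.card V) :
    etaP G = 2 ↔ Nonempty (G ≃g (⊤ : SimpleGraph (Fin 2))) := by
  classical
  constructor
  · intro h
    obtain ⟨a, b, hab, hall, hadj⟩ := exists_of_etaP_two G h
    refine ⟨⟨⟨fun v => if v = a then 0 else 1, fun i => if i = 0 then a else b,
      ?_, ?_⟩, ?_⟩⟩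
    · intro v
      rcases hall v with rfl | rfl <;> simp [hab, Ne.symm hab]
    · intro i
      fin_cases i <;> simp [hab, Ne.symm hab]
    · intro x y
      simp only [Equiv.coe_fn_mk, top_adj]
      rcases hall x with rfl | rfl <;> rcases hall y with rfl | rfl <;>
        simp_all [hadj.symm, Ne.symm hab]
  · rintro ⟨e⟩
    have h01 : ((0 : Fin 2)) ≠ 1 := by decide
    refine etaP_eq_two_of G (a := e.symm 0) (b := e.symm 1) ?_ ?_ ?_
    · intro hh
      exact h01 (e.symm.toEquiv.injective hh)
    · intro v
      have h2 : ∀ i : Fin 2, i = 0 ∨ i = 1 := by decide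
      rcases h2 (e v) with hh | hh
      · exact Or.inl (by rw [← hh]; exact (e.toEquiv.symm_apply_apply v).symm)
      · exact Or.inr (by rw [← hh]; exact (e.toEquiv.symm_apply_apply v).symm)
    · exact e.symm.map_adj_iff.2 (by simp)
end

section
/- For every pair of integers a, b with 3 ≤ a ≤ b + 1, there exists a connected graph G with η_p(G) = a and η(G) = b. -/
open SimpleGraph Set

section LeafLemma
variable {V : Type*} {G : SimpleGraph V}

lemma leaf_walk_aux {x p : V} (hx : ∀ y, G.Adj x y → y = p) :
    ∀ {z : V} (q : G.Walk x z), z ≠ x → G.dist p z + 1 ≤ q.length := by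
  intro z q hz
  cases q with
  | nil => exact absurd rfl hz
  | @cons _ y _ h' r =>
      have hy : y = p := hx _ h'
      subst hy
      have := G.dist_le r
      simp only [Walk.length_cons]
      omega

/-- distance to a leaf goes through its support vertex -/
lemma leaf_dist {x p z : V} (hadj : G.Adj x p) (hx : ∀ y, G.Adj x y → y = p)
    (hz : z ≠ x) (hr : G.Reachable z x) : G.dist z x = G.dist z p + 1 := by
  have hzp : G.Reachable z p := hr.trans hadj.reachable
  obtain ⟨q, hq⟩ := hzp.exists_walk_length_eq_dist
  have hub : G.dist z x ≤ G.dist z p + 1 := by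
    have := G.dist_le (q.append (Walk.cons hadj.symm Walk.nil))
    simpa [hq] using this
  have hlb : G.dist z p + 1 ≤ G.dist z x := by
    obtain ⟨w, hw⟩ := hr.exists_walk_length_eq_dist
    have := leaf_walk_aux hx w.reverse hz
    rw [Walk.length_reverse, hw, G.dist_comm] at this
    exact this
  omega

end LeafLemma

namespace Cat

variable (k h : ℕ)

abbrev Vt := Fin k ⊕ (Fin k ⊕ Fin h)

variable {k h}

def vv (i : Fin k) : Vt k h := Sum.inl i
def uu (i : Fin k) : Vt k h := Sum.inr (Sum.inl i)
def ww (s : Fin h) : Vt k h := Sum.inr (Sum.inr s)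

variable (k h)

/-- the caterpillar graph -/
def G : SimpleGraph (Vt k h) where
  Adj x y :=
    (∃ i j : Fin k, x = vv i ∧ y = vv j ∧ (i.val + 1 = j.val ∨ j.val + 1 = i.val)) ∨
    (∃ i : Fin k, (x = vv i ∧ y = uu i) ∨ (x = uu i ∧ y = vv i)) ∨
    (∃ (i : Fin k) (s : Fin h), i.val = 0 ∧ ((x = vv i ∧ y = ww s) ∨ (x = ww s ∧ y = vv i)))
  symm := by
    constructor
    rintro x y (⟨i, j, rfl, rfl, hij⟩ | ⟨i, (⟨rfl, rfl⟩ | ⟨rfl, rfl⟩)⟩ | ⟨i, s, h0, (⟨rfl, rfl⟩ | ⟨rfl, rfl⟩)⟩)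
    · exact Or.inl ⟨j, i, rfl, rfl, hij.symm⟩
    · exact Or.inr (Or.inl ⟨i, Or.inr ⟨rfl, rfl⟩⟩)
    · exact Or.inr (Or.inl ⟨i, Or.inl ⟨rfl, rfl⟩⟩)
    · exact Or.inr (Or.inr ⟨i, s, h0, Or.inr ⟨rfl, rfl⟩⟩)
    · exact Or.inr (Or.inr ⟨i, s, h0, Or.inl ⟨rfl, rfl⟩⟩)
  loopless := by
    constructor
    rintro x (⟨i, j, rfl, h1, hij⟩ | ⟨i, (⟨rfl, h1⟩ | ⟨rfl, h1⟩)⟩ | ⟨i, s, h0, (⟨rfl, h1⟩ | ⟨rfl, h1⟩)⟩) <;>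
      simp_all [vv, uu, ww]

variable {k h}

lemma vv_inj : Function.Injective (vv : Fin k → Vt k h) := by
  intro a b hab; simpa [vv] using hab
lemma uu_inj : Function.Injective (uu : Fin k → Vt k h) := by
  intro a b hab; simpa [uu] using hab
lemma ww_inj : Function.Injective (ww : Fin h → Vt k h) := by
  intro a b hab; simpa [ww] using hab

-- basic adjacency facts
lemma adj_vv_vv {i j : Fin k} (hij : i.val + 1 = j.val ∨ j.val + 1 = i.val) :
    (G k h).Adj (vv i) (vv j) := Or.inl ⟨i, j, rfl, rfl, hij⟩
lemma adj_vv_uu (i : Fin k) : (G k h).Adj (vv i) (uu i) := Or.inr (Or.inl ⟨i, Or.inl ⟨rfl, rfl⟩⟩)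
lemma adj_vv_ww {i : Fin k} (h0 : i.val = 0) (s : Fin h) : (G k h).Adj (vv i) (ww s) :=
  Or.inr (Or.inr ⟨i, s, h0, Or.inl ⟨rfl, rfl⟩⟩)

/-- neighbors of `uu i` : only `vv i`. -/
lemma adj_uu {i : Fin k} {z : Vt k h} (hz : (G k h).Adj (uu i) z) : z = vv i := by
  rcases hz with ⟨i', j', h1, h2, hij⟩ | ⟨i', (⟨h1, h2⟩ | ⟨h1, h2⟩)⟩ | ⟨i', s, h0, (⟨h1, h2⟩ | ⟨h1, h2⟩)⟩ <;>
    simp_all [vv, uu, ww]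

/-- neighbors of `ww s` : only `vv i` with `i = 0`. -/
lemma adj_ww {s : Fin h} {z : Vt k h} (hz : (G k h).Adj (ww s) z) :
    ∃ i : Fin k, i.val = 0 ∧ z = vv i := by
  rcases hz with ⟨i', j', h1, h2, hij⟩ | ⟨i', (⟨h1, h2⟩ | ⟨h1, h2⟩)⟩ | ⟨i', s', h0, (⟨h1, h2⟩ | ⟨h1, h2⟩)⟩ <;>
    simp_all [vv, uu, ww]

/-- level function -/
def lvl : Vt k h → ℕ
  | Sum.inl i => i.val
  | Sum.inr (Sum.inl i) => i.val + 1
  | Sum.inr (Sum.inr _) => 1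

lemma lvl_lip {x y : Vt k h} (hxy : (G k h).Adj x y) : lvl x ≤ lvl y + 1 ∧ lvl y ≤ lvl x + 1 := by
  rcases hxy with ⟨i, j, rfl, rfl, hij⟩ | ⟨i, (⟨rfl, rfl⟩ | ⟨rfl, rfl⟩)⟩ | ⟨i, s, h0, (⟨rfl, rfl⟩ | ⟨rfl, rfl⟩)⟩ <;>
    simp [lvl, vv, uu, ww] <;> omega

lemma lvl_le_walk {x y : Vt k h} (p : (G k h).Walk x y) : lvl x ≤ lvl y + p.length := by
  induction p with
  | nil => simp
  | cons hadj q ih =>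
      have := (lvl_lip hadj).1
      simp only [Walk.length_cons]
      omega

end Cat
namespace Cat
variable {k h : ℕ}

def v0 (hk : 0 < k) : Vt k h := vv ⟨0, hk⟩

def spineWalk (hk : 0 < k) : ∀ m : ℕ, (hm : m < k) → (G k h).Walk (vv ⟨m, hm⟩) (v0 hk)
  | 0, _ => Walk.nil
  | m + 1, hm =>
      Walk.cons (adj_vv_vv (j := ⟨m, by omega⟩) (Or.inr rfl)) (spineWalk hk m (by omega))

lemma spineWalk_length (hk : 0 < k) (m : ℕ) (hm : m < k) :
    (spineWalk (h := h) hk m hm).length = m := by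
  induction m with
  | zero => rfl
  | succ n ih => simp [spineWalk, ih]

lemma reach_v0 (hk : 0 < k) (x : Vt k h) : (G k h).Reachable x (v0 hk) := by
  rcases x with i | i | s
  · exact ⟨spineWalk hk i.val i.isLt⟩
  · exact ⟨Walk.cons (adj_vv_uu i).symm (spineWalk hk i.val i.isLt)⟩
  · exact ⟨Walk.cons (adj_vv_ww (i := ⟨0, hk⟩) rfl s).symm Walk.nil⟩

lemma connected (hk : 0 < k) : (G k h).Connected :=
  (connected_iff_exists_forall_reachable _).mpr ⟨v0 hk, fun x => (reach_v0 hk x).symm⟩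

lemma dist_v0 (hk : 0 < k) (x : Vt k h) : (G k h).dist x (v0 hk) = lvl x := by
  have hub : (G k h).dist x (v0 hk) ≤ lvl x := by
    rcases x with i | i | s
    · have := (G k h).dist_le (spineWalk hk i.val i.isLt)
      rwa [spineWalk_length] at this
    · have := (G k h).dist_le (Walk.cons (adj_vv_uu i).symm (spineWalk hk i.val i.isLt))
      rw [Walk.length_cons, spineWalk_length] at this
      exact this
    · have := (G k h).dist_le (Walk.cons (adj_vv_ww (i := ⟨0, hk⟩) rfl s).symm Walk.nil)
      exact (by simpa using this : (G k h).dist (ww s) (vv ⟨0, hk⟩) ≤ 1)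
  have hlb : lvl x ≤ (G k h).dist x (v0 hk) := by
    obtain ⟨w, hw⟩ := (reach_v0 hk x).exists_walk_length_eq_dist
    have := lvl_le_walk w
    rw [hw] at this
    simpa [v0, lvl, vv] using this
  omega

lemma dist_uu (hk : 0 < k) {z : Vt k h} (i : Fin k) (hz : z ≠ uu i) :
    (G k h).dist z (uu i) = (G k h).dist z (vv i) + 1 :=
  leaf_dist (adj_vv_uu i).symm (fun _ hy => adj_uu hy) hz
    ((reach_v0 hk z).trans (reach_v0 hk (uu i)).symm)

lemma dist_ww (hk : 0 < k) {z : Vt k h} (s : Fin h) (hz : z ≠ ww s) :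
    (G k h).dist z (ww s) = (G k h).dist z (v0 hk) + 1 :=
  leaf_dist (adj_vv_ww (i := ⟨0, hk⟩) rfl s).symm
    (fun y hy => by
      obtain ⟨i, hi0, rfl⟩ := adj_ww hy
      simp only [v0, vv]
      congr 1
      exact Fin.ext hi0)
    hz ((reach_v0 hk z).trans (reach_v0 hk (ww s)).symm)

lemma dist_pos (hk : 0 < k) {x y : Vt k h} (hxy : x ≠ y) : 0 < (G k h).dist x y :=
  ((reach_v0 hk x).trans (reach_v0 hk y).symm).pos_dist_of_ne hxy

end Cat
section PDist
variable {V : Type*} {G : SimpleGraph V}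

lemma pdist_exact {v : V} {S : Set V} {m : ℕ} (h1 : ∃ u ∈ S, G.dist v u = m)
    (h2 : ∀ u ∈ S, m ≤ G.dist v u) : pDist G v S = m := by
  obtain ⟨u, hu, he⟩ := h1
  refine le_antisymm (Nat.sInf_le ⟨u, hu, he⟩) (le_csInf ⟨m, u, hu, he⟩ ?_)
  rintro x ⟨z, hz, rfl⟩
  exact h2 z hz

lemma pdist_zero_of_mem {v : V} {S : Set V} (hv : v ∈ S) : pDist G v S = 0 :=
  pdist_exact ⟨v, hv, G.dist_self⟩ (fun _ _ => Nat.zero_le _)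

lemma pdist_singleton (v u : V) : pDist G v {u} = G.dist v u := by
  simp [pDist]

lemma pdist_ne_one {v : V} {S : Set V} (hv : ∀ u ∈ S, G.dist v u ≠ 1) :
    pDist G v S ≠ 1 := by
  intro he
  have hne : (G.dist v '' S).Nonempty := by
    by_contra hcon
    rw [Set.not_nonempty_iff_eq_empty] at hcon
    simp [pDist, hcon, Nat.sInf_empty] at he
  have := Nat.sInf_mem hne
  rw [show sInf (G.dist v '' S) = pDist G v S from rfl, he] at this
  obtain ⟨z, hz, hz1⟩ := this
  exact hv z hz hz1

end PDist

namespace Cat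
variable {k h : ℕ}

def A : Set (Vt k h) := Set.range vv
def B : Set (Vt k h) := Set.range uu

-- pDist catalog
lemma pdist_uu_A (hk : 0 < k) (i : Fin k) : pDist (G k h) (uu i) A = 1 := by
  refine pdist_exact ⟨vv i, ⟨i, rfl⟩, ?_⟩ ?_
  · exact dist_eq_one_iff_adj.mpr (adj_vv_uu i).symm
  · rintro _ ⟨j, rfl⟩
    exact dist_pos hk (by simp [uu, vv])

lemma pdist_vv_B (hk : 0 < k) (i : Fin k) : pDist (G k h) (vv i) B = 1 := by
  refine pdist_exact ⟨uu i, ⟨i, rfl⟩, ?_⟩ ?_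
  · exact dist_eq_one_iff_adj.mpr (adj_vv_uu i)
  · rintro _ ⟨j, rfl⟩
    exact dist_pos hk (by simp [uu, vv])

lemma pdist_ww_A (hk : 0 < k) (s : Fin h) : pDist (G k h) (ww s) A = 1 := by
  refine pdist_exact ⟨vv ⟨0, hk⟩, ⟨_, rfl⟩, ?_⟩ ?_
  · exact dist_eq_one_iff_adj.mpr (adj_vv_ww rfl s).symm
  · rintro _ ⟨j, rfl⟩
    exact dist_pos hk (by simp [ww, vv])

lemma dist_ww_v0 (hk : 0 < k) (s : Fin h) : (G k h).dist (ww s) (v0 hk) = 1 :=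
  dist_v0 hk (ww s)

lemma pdist_ww_B (hk : 0 < k) (s : Fin h) : pDist (G k h) (ww s) B = 2 := by
  have key : ∀ j : Fin k, (G k h).dist (ww s) (uu j) = (G k h).dist (ww s) (vv j) + 1 :=
    fun j => dist_uu hk j (by simp [ww, uu])
  refine pdist_exact ⟨uu ⟨0, hk⟩, ⟨_, rfl⟩, ?_⟩ ?_
  · rw [key]
    have : (vv (⟨0, hk⟩ : Fin k) : Vt k h) = v0 hk := rfl
    rw [this, dist_ww_v0 hk s]
  · rintro _ ⟨j, rfl⟩
    rw [key]
    have := dist_pos hk (x := ww s) (y := vv j) (by simp [ww, vv])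
    omega

lemma dist_to_ww (hk : 0 < k) (s : Fin h) (z : Vt k h) (hz : z ≠ ww s) :
    (G k h).dist z (ww s) = lvl z + 1 := by
  rw [dist_ww hk s hz, dist_v0 hk]

end Cat
namespace Cat
variable {k h : ℕ}

def P : Set (Set (Vt k h)) :=
  insert A (insert B (Set.range fun s : Fin h => ({ww s} : Set (Vt k h))))

lemma not_vv_mem_B (i : Fin k) : (vv i : Vt k h) ∉ B := by
  rintro ⟨j, hj⟩; simp [vv, uu] at hj
lemma not_uu_mem_A (i : Fin k) : (uu i : Vt k h) ∉ A := by
  rintro ⟨j, hj⟩; simp [vv, uu] at hj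
lemma not_ww_mem_A (s : Fin h) : (ww s : Vt k h) ∉ A := by
  rintro ⟨j, hj⟩; simp [vv, ww] at hj
lemma not_ww_mem_B (s : Fin h) : (ww s : Vt k h) ∉ B := by
  rintro ⟨j, hj⟩; simp [uu, ww] at hj

lemma isPartition_P (hk : 0 < k) : Setoid.IsPartition (P (k := k) (h := h)) := by
  constructor
  · intro hmem
    rcases hmem with hA | hB | ⟨s, hs⟩
    · exact absurd (show (vv ⟨0, hk⟩ : Vt k h) ∈ (∅ : Set (Vt k h)) from hA ▸ ⟨_, rfl⟩) (by simp)
    · exact absurd (show (uu ⟨0, hk⟩ : Vt k h) ∈ (∅ : Set (Vt k h)) from hB ▸ ⟨_, rfl⟩) (by simp)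
    · exact absurd (show (ww s : Vt k h) ∈ (∅ : Set (Vt k h)) from hs ▸ rfl) (by simp)
  · intro x
    rcases x with i | i | s
    · refine ⟨A, ⟨Or.inl rfl, ⟨i, rfl⟩⟩, ?_⟩
      rintro S ⟨(rfl | rfl | ⟨t, rfl⟩), hx⟩
      · rfl
      · exact absurd hx (not_vv_mem_B i)
      · exact absurd hx (by simp [vv, ww])
    · refine ⟨B, ⟨Or.inr (Or.inl rfl), ⟨i, rfl⟩⟩, ?_⟩
      rintro S ⟨(rfl | rfl | ⟨t, rfl⟩), hx⟩
      · exact absurd hx (not_uu_mem_A i)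
      · rfl
      · exact absurd hx (by simp [uu, ww])
    · refine ⟨{ww s}, ⟨Or.inr (Or.inr ⟨s, rfl⟩), rfl⟩, ?_⟩
      rintro S ⟨(rfl | rfl | ⟨t, rfl⟩), hx⟩
      · exact absurd hx (not_ww_mem_A s)
      · exact absurd hx (not_ww_mem_B s)
      · simp only [Set.mem_singleton_iff] at hx
        rw [ww_inj hx.symm]

lemma lvl_vv (i : Fin k) : lvl (vv i : Vt k h) = i.val := rfl
lemma lvl_uu (i : Fin k) : lvl (uu i : Vt k h) = i.val + 1 := rfl
lemma lvl_ww (s : Fin h) : lvl (ww s : Vt k h) = 1 := rfl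

lemma isResolvingFam_P (hk : 0 < k) (hh : 0 < h) :
    IsResolvingFam (G k h) (P (k := k) (h := h)) := by
  set s0 : Fin h := ⟨0, hh⟩ with hs0
  have hws0 : ({ww s0} : Set (Vt k h)) ∈ P (k := k) (h := h) := Or.inr (Or.inr ⟨s0, rfl⟩)
  have hA : (A : Set (Vt k h)) ∈ P (k := k) (h := h) := Or.inl rfl
  have hB : (B : Set (Vt k h)) ∈ P (k := k) (h := h) := Or.inr (Or.inl rfl)
  have vvww : ∀ (i : Fin k) (s : Fin h), (vv i : Vt k h) ≠ ww s := by simp [vv, ww]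
  have uuww : ∀ (i : Fin k) (s : Fin h), (uu i : Vt k h) ≠ ww s := by simp [uu, ww]
  have hvu : ∀ i j : Fin k,
      pDist (G k h) (vv i) A ≠ pDist (G k h) (uu j) A := fun i j => by
    rw [pdist_zero_of_mem (show (vv i : Vt k h) ∈ A from ⟨i, rfl⟩), pdist_uu_A hk]; omega
  have hvw : ∀ (i : Fin k) (s : Fin h),
      pDist (G k h) (vv i) A ≠ pDist (G k h) (ww s) A := fun i s => by
    rw [pdist_zero_of_mem (show (vv i : Vt k h) ∈ A from ⟨i, rfl⟩), pdist_ww_A hk]; omega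
  have huw : ∀ (i : Fin k) (s : Fin h),
      pDist (G k h) (uu i) B ≠ pDist (G k h) (ww s) B := fun i s => by
    rw [pdist_zero_of_mem (show (uu i : Vt k h) ∈ B from ⟨i, rfl⟩), pdist_ww_B hk]; omega
  intro x y hxy
  rcases x with i | i | s <;> rcases y with j | j | t
  · refine ⟨{ww s0}, hws0, ?_⟩
    show pDist (G k h) (vv i) {ww s0} ≠ pDist (G k h) (vv j) {ww s0}
    rw [pdist_singleton, pdist_singleton,
      dist_to_ww hk s0 _ (vvww i s0), dist_to_ww hk s0 _ (vvww j s0), lvl_vv, lvl_vv]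
    have : i ≠ j := fun hij => hxy (by rw [show (Sum.inl i : Vt k h) = vv i from rfl, hij]; rfl)
    simpa [Fin.val_eq_val] using this
  · exact ⟨A, hA, hvu i j⟩
  · exact ⟨A, hA, hvw i t⟩
  · exact ⟨A, hA, (hvu j i).symm⟩
  · refine ⟨{ww s0}, hws0, ?_⟩
    show pDist (G k h) (uu i) {ww s0} ≠ pDist (G k h) (uu j) {ww s0}
    rw [pdist_singleton, pdist_singleton,
      dist_to_ww hk s0 _ (uuww i s0), dist_to_ww hk s0 _ (uuww j s0), lvl_uu, lvl_uu]
    have : i ≠ j := fun hij => hxy (by rw [show (Sum.inr (Sum.inl i) : Vt k h) = uu i from rfl, hij]; rfl)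
    simpa [Fin.val_eq_val] using this
  · exact ⟨B, hB, huw i t⟩
  · exact ⟨A, hA, (hvw j s).symm⟩
  · exact ⟨B, hB, (huw j s).symm⟩
  · refine ⟨{ww s}, Or.inr (Or.inr ⟨s, rfl⟩), ?_⟩
    show pDist (G k h) (ww s) {ww s} ≠ pDist (G k h) (ww t) {ww s}
    have hst : (ww t : Vt k h) ≠ ww s := fun he => hxy (by rw [show (Sum.inr (Sum.inr s) : Vt k h) = ww s from rfl, ← he]; rfl)
    rw [pdist_singleton, pdist_singleton, (G k h).dist_self, dist_to_ww hk s _ hst, lvl_ww]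
    omega

lemma isDominatingFam_P (hk : 0 < k) :
    IsDominatingFam (G k h) (P (k := k) (h := h)) := by
  intro x
  rcases x with i | i | s
  · exact ⟨B, Or.inr (Or.inl rfl), pdist_vv_B hk i⟩
  · exact ⟨A, Or.inl rfl, pdist_uu_A hk i⟩
  · exact ⟨A, Or.inl rfl, pdist_ww_A hk s⟩

lemma ncard_P (hk : 0 < k) : (P (k := k) (h := h)).ncard = h + 2 := by
  have hR : (Set.range fun s : Fin h => ({ww s} : Set (Vt k h))).ncard = h := by
    rw [← Set.image_univ, Set.ncard_image_of_injective _ (fun s t hst => by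
      simpa using ww_inj (Set.singleton_eq_singleton_iff.mp hst)),
      Set.ncard_univ, Nat.card_eq_fintype_card, Fintype.card_fin]
  have hBnotin : (B : Set (Vt k h)) ∉ Set.range fun s : Fin h => ({ww s} : Set (Vt k h)) := by
    rintro ⟨s, hs⟩
    have : (uu ⟨0, hk⟩ : Vt k h) ∈ B := ⟨_, rfl⟩
    rw [← hs] at this
    simp [uu, ww] at this
  have hAnotin : (A : Set (Vt k h)) ∉
      insert B (Set.range fun s : Fin h => ({ww s} : Set (Vt k h))) := by
    rintro (hs | ⟨s, hs⟩)
    · exact not_vv_mem_B ⟨0, hk⟩ (hs ▸ (show (vv ⟨0, hk⟩ : Vt k h) ∈ A from ⟨_, rfl⟩))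
    · have : (vv ⟨0, hk⟩ : Vt k h) ∈ A := ⟨_, rfl⟩
      rw [← hs] at this
      simp [vv, ww] at this
  rw [P, Set.ncard_insert_of_notMem hAnotin, Set.ncard_insert_of_notMem hBnotin, hR]

end Cat
namespace Cat
variable {k h : ℕ}

/-! ### Lower bound machinery: twins -/

/-- the twin set: `uu 0` together with all the `ww s` -/
def T (hk : 0 < k) : Set (Vt k h) := insert (uu ⟨0, hk⟩) (Set.range ww)

lemma mem_T_leaf {hk : 0 < k} {x : Vt k h} (hx : x ∈ T hk) :
    (G k h).Adj x (v0 hk) ∧ (∀ y, (G k h).Adj x y → y = v0 hk) := by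
  rcases hx with rfl | ⟨s, rfl⟩
  · exact ⟨(adj_vv_uu _).symm, fun y hy => adj_uu hy⟩
  · refine ⟨(adj_vv_ww rfl s).symm, fun y hy => ?_⟩
    obtain ⟨i, hi0, rfl⟩ := adj_ww hy
    simp only [v0, vv]
    congr 1
    exact Fin.ext hi0

lemma dist_to_T {hk : 0 < k} {x : Vt k h} (hx : x ∈ T hk) {z : Vt k h} (hz : z ≠ x) :
    (G k h).dist z x = (G k h).dist z (v0 hk) + 1 := by
  obtain ⟨hadj, huniq⟩ := mem_T_leaf hx
  exact leaf_dist hadj huniq hz ((reach_v0 hk z).trans (reach_v0 hk x).symm)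

lemma twin_dist {hk : 0 < k} {x y : Vt k h} (hx : x ∈ T hk) (hy : y ∈ T hk)
    {z : Vt k h} (hzx : z ≠ x) (hzy : z ≠ y) : (G k h).dist z x = (G k h).dist z y := by
  rw [dist_to_T hx hzx, dist_to_T hy hzy]

lemma v0_not_mem_T (hk : 0 < k) : v0 hk ∉ T (h := h) hk := by
  rintro (he | ⟨s, hs⟩)
  · exact absurd he (by simp [v0, vv, uu])
  · exact absurd hs (by simp [v0, vv, ww])

lemma ncard_T (hk : 0 < k) : (T (h := h) hk).ncard = h + 1 := by
  have h1 : (uu (⟨0, hk⟩ : Fin k) : Vt k h) ∉ Set.range ww := by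
    rintro ⟨s, hs⟩; simp [uu, ww] at hs
  rw [T, Set.ncard_insert_of_notMem h1, ← Set.image_univ,
    Set.ncard_image_of_injective _ ww_inj, Set.ncard_univ, Nat.card_eq_fintype_card,
    Fintype.card_fin]

end Cat
namespace Cat
variable {k h : ℕ}

lemma etaP_lower (hk : 0 < k) (hh : 0 < h) (P' : Set (Set (Vt k h)))
    (hpart : Setoid.IsPartition P') (hres : IsResolvingFam (G k h) P')
    (hdom : IsDominatingFam (G k h) P') : h + 2 ≤ P'.ncard := by
  -- the part containing a vertex
  have hEx : ∀ x : Vt k h, ∃ S, (S ∈ P' ∧ x ∈ S) ∧ ∀ S', S' ∈ P' → x ∈ S' → S' = S := by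
    intro x
    obtain ⟨S, hS, hu⟩ := hpart.2 x
    exact ⟨S, hS, fun S' h1 h2 => hu S' ⟨h1, h2⟩⟩
  choose pt hpt hptu using hEx
  -- twins lie in distinct parts
  have hinj : Set.InjOn pt (T hk) := by
    intro x hx y hy hxy
    by_contra hne
    obtain ⟨S, hS, hSd⟩ := hres x y hne
    by_cases hxS : x ∈ S
    · have hSx : S = pt x := hptu x S hS hxS
      have hyS : y ∈ S := by rw [hSx, hxy]; exact (hpt y).2
      exact hSd (by rw [pdist_zero_of_mem hxS, pdist_zero_of_mem hyS])
    · have hyS : y ∉ S := by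
        intro hyS
        exact hxS (by rw [show S = pt y from hptu y S hS hyS, ← hxy]; exact (hpt x).2)
      refine hSd ?_
      unfold pDist
      congr 1
      apply Set.image_congr
      intro z hz
      have hzx : z ≠ x := fun he => hxS (he ▸ hz)
      have hzy : z ≠ y := fun he => hyS (he ▸ hz)
      rw [(G k h).dist_comm, (G k h).dist_comm (v := z), twin_dist hx hy hzx hzy]
  have hfin : P'.Finite := Set.toFinite _
  have himsub : pt '' T hk ⊆ P' := by
    rintro _ ⟨t, _, rfl⟩; exact (hpt t).1
  have himcard : (pt '' T hk).ncard = h + 1 := by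
    rw [Set.ncard_image_of_injOn hinj, ncard_T]
  have hge1 : h + 1 ≤ P'.ncard := by
    calc h + 1 = (pt '' T hk).ncard := himcard.symm
    _ ≤ P'.ncard := Set.ncard_le_ncard himsub hfin
  by_contra hcon
  push_neg at hcon
  have hcard : P'.ncard ≤ (pt '' T hk).ncard := by omega
  have heq : pt '' T hk = P' := Set.eq_of_subset_of_ncard_le himsub hcard hfin
  -- v0's part equals the part of some twin t
  have : pt (v0 hk) ∈ pt '' T hk := heq.symm ▸ (hpt (v0 hk)).1
  obtain ⟨t, htT, htv0⟩ := this
  have hv0t : v0 hk ∈ pt t := by rw [htv0]; exact (hpt (v0 hk)).2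
  -- t is not dominated
  obtain ⟨S, hS, hS1⟩ := hdom t
  by_cases htS : t ∈ S
  · rw [pdist_zero_of_mem htS] at hS1
    exact absurd hS1 (by omega)
  · refine pdist_ne_one (fun z hz hz1 => ?_) hS1
    have hadj : (G k h).Adj t z := dist_eq_one_iff_adj.mp hz1
    have hzv0 : z = v0 hk := (mem_T_leaf htT).2 z hadj
    subst hzv0
    have : S = pt t := (hptu (v0 hk) S hS hz).trans htv0.symm
    exact htS (this ▸ (hpt t).2)
  done

end Cat
namespace Cat
variable {k h : ℕ}

lemma etaP_eq (hk : 0 < k) (hh : 0 < h) : etaP (G k h) = h + 2 := by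
  have hmem : h + 2 ∈ {m | ∃ P' : Set (Set (Vt k h)), Setoid.IsPartition P' ∧
      IsResolvingFam (G k h) P' ∧ IsDominatingFam (G k h) P' ∧ P'.ncard = m} :=
    ⟨P, isPartition_P hk, isResolvingFam_P hk hh, isDominatingFam_P hk, ncard_P hk⟩
  refine le_antisymm (Nat.sInf_le hmem) (le_csInf ⟨_, hmem⟩ ?_)
  rintro m ⟨P', h1, h2, h3, rfl⟩
  exact etaP_lower hk hh P' h1 h2 h3

/-! ### etaNum -/

def Sset : Set (Vt k h) := A ∪ Set.range ww

lemma ncard_Sset (hk : 0 < k) : (Sset (k := k) (h := h)).ncard = k + h := by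
  have hdisj : Disjoint (A : Set (Vt k h)) (Set.range ww) := by
    rw [Set.disjoint_left]
    rintro _ ⟨i, rfl⟩ ⟨s, hs⟩
    simp [vv, ww] at hs
  rw [Sset, Set.ncard_union_eq hdisj]
  unfold A
  rw [← Set.image_univ, ← Set.image_univ,
    Set.ncard_image_of_injective _ vv_inj, Set.ncard_image_of_injective _ ww_inj,
    Set.ncard_univ, Set.ncard_univ, Nat.card_eq_fintype_card, Nat.card_eq_fintype_card,
    Fintype.card_fin, Fintype.card_fin]

lemma not_mem_Sset {x : Vt k h} (hx : x ∉ Sset (k := k) (h := h)) : ∃ i, x = uu i := by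
  rcases x with i | i | s
  · exact absurd (Or.inl ⟨i, rfl⟩) hx
  · exact ⟨i, rfl⟩
  · exact absurd (Or.inr ⟨s, rfl⟩) hx

lemma isResolvingSet_Sset (hk : 0 < k) : IsResolvingSet (G k h) (Sset (k := k) (h := h)) := by
  intro x y hxy
  by_cases hx : x ∈ Sset (k := k) (h := h)
  · refine ⟨x, hx, ?_⟩
    rw [(G k h).dist_self]
    exact fun he => absurd he.symm (dist_pos hk hxy.symm).ne'
  · by_cases hy : y ∈ Sset (k := k) (h := h)
    · refine ⟨y, hy, ?_⟩
      rw [(G k h).dist_self]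
      exact fun he => absurd he (dist_pos hk hxy).ne'
    · obtain ⟨i, rfl⟩ := not_mem_Sset hx
      obtain ⟨j, rfl⟩ := not_mem_Sset hy
      refine ⟨v0 hk, Or.inl ⟨_, rfl⟩, ?_⟩
      rw [dist_v0 hk, dist_v0 hk, lvl_uu, lvl_uu]
      have : i ≠ j := fun hij => hxy (by rw [hij])
      simpa [Fin.val_eq_val] using this

lemma isDominatingSet_Sset : IsDominatingSet (G k h) (Sset (k := k) (h := h)) := by
  intro x hx
  obtain ⟨i, rfl⟩ := not_mem_Sset hx
  exact ⟨vv i, Or.inl ⟨i, rfl⟩, adj_vv_uu i⟩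

lemma etaNum_lower (hk : 0 < k) (S : Set (Vt k h))
    (hres : IsResolvingSet (G k h) S) (hdom : IsDominatingSet (G k h) S) :
    h + k ≤ S.ncard := by
  -- at most one twin outside S
  have hT1 : ((T hk : Set (Vt k h)) \ S).ncard ≤ 1 := by
    rw [Set.ncard_le_one (Set.toFinite _)]
    intro x hx y hy
    by_contra hne
    obtain ⟨z, hz, hzd⟩ := hres x y hne
    have hzx : z ≠ x := fun he => hx.2 (he ▸ hz)
    have hzy : z ≠ y := fun he => hy.2 (he ▸ hz)
    exact hzd (by rw [(G k h).dist_comm, twin_dist hx.1 hy.1 hzx hzy, (G k h).dist_comm])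
  have hTcap : h ≤ ((T hk : Set (Vt k h)) ∩ S).ncard := by
    have hun : (T hk : Set (Vt k h)) = (T hk ∩ S) ∪ (T hk \ S) := (Set.inter_union_diff _ _).symm
    have := Set.ncard_union_le (T hk ∩ S) ((T hk : Set (Vt k h)) \ S)
    rw [← hun, ncard_T] at this
    omega
  -- one vertex per spine pair
  classical
  set c : Fin k → Vt k h := fun i => if uu i ∈ S then uu i else vv i with hc
  have hcS : ∀ i, c i ∈ S := by
    intro i
    by_cases hui : uu i ∈ S
    · simpa [hc, hui]
    · obtain ⟨u, huS, hadj⟩ := hdom (uu i) hui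
      have : u = vv i := adj_uu hadj.symm
      simpa [hc, hui, ← this]
  have hcmem : ∀ i, c i = uu i ∨ c i = vv i := by
    intro i
    by_cases hui : uu i ∈ S
    · simp [hc, hui]
    · simp [hc, hui]
  have hcinj : Function.Injective c := by
    intro i j hij
    rcases hcmem i with hi | hi <;> rcases hcmem j with hj | hj <;>
      rw [hi, hj] at hij <;> first
        | exact uu_inj hij
        | exact vv_inj hij
        | (exfalso; simp [uu, vv] at hij)
  by_cases hv0 : v0 hk ∈ S
  · -- use v0 instead of c 0
    set c' : Fin k → Vt k h := fun i => if i.val = 0 then v0 hk else c i with hc'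
    have hc'S : ∀ i, c' i ∈ S := by
      intro i
      by_cases hi : i.val = 0 <;> simp [hc', hi, hv0, hcS]
    have hc'inj : Function.Injective c' := by
      intro i j hij
      simp only [hc'] at hij
      by_cases hi : i.val = 0 <;> by_cases hj : j.val = 0
      · exact Fin.ext (hi.trans hj.symm)
      · rw [if_pos hi, if_neg hj] at hij
        exfalso
        rcases hcmem j with hcj | hcj <;> rw [hcj] at hij
        · exact absurd hij (by simp [v0, vv, uu])
        · exact hj (congrArg Fin.val (vv_inj hij)).symm
      · rw [if_neg hi, if_pos hj] at hij
        exfalso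
        rcases hcmem i with hci | hci <;> rw [hci] at hij
        · exact absurd hij (by simp [v0, vv, uu])
        · exact hi (congrArg Fin.val (vv_inj hij.symm)).symm
      · rw [if_neg hi, if_neg hj] at hij
        exact hcinj hij
    have hdisj : Disjoint ((T hk : Set (Vt k h)) ∩ S) (Set.range c') := by
      rw [Set.disjoint_left]
      rintro x ⟨hxT, _⟩ ⟨i, rfl⟩
      by_cases hi : i.val = 0
      · rw [show c' i = v0 hk by simp [hc', hi]] at hxT
        exact v0_not_mem_T hk hxT
      · rw [show c' i = c i by simp [hc', hi]] at hxT
        rcases hcmem i with hci | hci <;> rw [hci] at hxT <;>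
          rcases hxT with he | ⟨s, hs⟩
        · exact hi (congrArg Fin.val (show i = (⟨0, hk⟩ : Fin k) by simpa [uu] using he))
        · simp [uu, ww] at hs
        · simp [vv, uu] at he
        · simp [vv, ww] at hs
    have hsub : ((T hk : Set (Vt k h)) ∩ S) ∪ Set.range c' ⊆ S := by
      rintro x (⟨_, hxS⟩ | ⟨i, rfl⟩)
      · exact hxS
      · exact hc'S i
    have hrange : (Set.range c').ncard = k := by
      rw [← Set.image_univ, Set.ncard_image_of_injective _ hc'inj, Set.ncard_univ,
        Nat.card_eq_fintype_card, Fintype.card_fin]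
    calc h + k ≤ ((T hk : Set (Vt k h)) ∩ S).ncard + (Set.range c').ncard := by
          rw [hrange]; omega
      _ = (((T hk : Set (Vt k h)) ∩ S) ∪ Set.range c').ncard :=
          (Set.ncard_union_eq hdisj (Set.toFinite _) (Set.toFinite _)).symm
      _ ≤ S.ncard := Set.ncard_le_ncard hsub (Set.toFinite _)
  · -- v0 ∉ S : all twins in S
    have hTS : (T hk : Set (Vt k h)) ⊆ S := by
      intro t htT
      by_contra htS
      obtain ⟨u, huS, hadj⟩ := hdom t htS
      have : u = v0 hk := (mem_T_leaf htT).2 u hadj.symm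
      exact hv0 (this ▸ huS)
    have hintcap : ((T hk : Set (Vt k h)) ∩ Set.range c).ncard ≤ 1 := by
      have hsub : (T hk : Set (Vt k h)) ∩ Set.range c ⊆ {uu ⟨0, hk⟩} := by
        rintro x ⟨hxT, i, rfl⟩
        rcases hcmem i with hci | hci <;> rw [hci] <;> rw [hci] at hxT <;>
          rcases hxT with he | ⟨s, hs⟩
        · exact he
        · simp [uu, ww] at hs
        · simp [vv, uu] at he
        · simp [vv, ww] at hs
      calc ((T hk : Set (Vt k h)) ∩ Set.range c).ncard ≤ ({uu ⟨0, hk⟩} : Set (Vt k h)).ncard :=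
            Set.ncard_le_ncard hsub (Set.toFinite _)
        _ = 1 := Set.ncard_singleton _
    have hrange : (Set.range c).ncard = k := by
      rw [← Set.image_univ, Set.ncard_image_of_injective _ hcinj, Set.ncard_univ,
        Nat.card_eq_fintype_card, Fintype.card_fin]
    have hsub : (T hk : Set (Vt k h)) ∪ Set.range c ⊆ S := by
      rintro x (hxT | ⟨i, rfl⟩)
      · exact hTS hxT
      · exact hcS i
    have hie := Set.ncard_union_add_ncard_inter (T hk : Set (Vt k h)) (Set.range c)
      (Set.toFinite _) (Set.toFinite _)
    rw [ncard_T, hrange] at hie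
    have : ((T hk : Set (Vt k h)) ∪ Set.range c).ncard ≤ S.ncard :=
      Set.ncard_le_ncard hsub (Set.toFinite _)
    omega

lemma etaNum_eq (hk : 0 < k) : etaNum (G k h) = h + k := by
  have hmem : h + k ∈ {m | ∃ S : Set (Vt k h), IsResolvingSet (G k h) S ∧
      IsDominatingSet (G k h) S ∧ S.ncard = m} :=
    ⟨Sset, isResolvingSet_Sset hk, isDominatingSet_Sset, by rw [ncard_Sset hk]; omega⟩
  refine le_antisymm (Nat.sInf_le hmem) (le_csInf ⟨_, hmem⟩ ?_)
  rintro m ⟨S, h1, h2, rfl⟩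
  exact etaNum_lower hk S h1 h2

end Cat
section Transport
variable {V V' : Type*} {G : SimpleGraph V} {H : SimpleGraph V'}

lemma iso_dist_le (φ : G ≃g H) (u v : V) : H.dist (φ u) (φ v) ≤ G.dist u v := by
  by_cases hr : G.Reachable u v
  · obtain ⟨w, hw⟩ := hr.exists_walk_length_eq_dist
    have := H.dist_le (w.map φ.toHom)
    rwa [Walk.length_map, hw] at this
  · have hr' : ¬ H.Reachable (φ u) (φ v) := fun hr' => hr (by
      have := hr'.map φ.symm.toHom
      simpa using this)
    rw [H.dist_eq_zero_of_not_reachable hr', G.dist_eq_zero_of_not_reachable hr]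

lemma iso_dist (φ : G ≃g H) (u v : V) : H.dist (φ u) (φ v) = G.dist u v := by
  refine le_antisymm (iso_dist_le φ u v) ?_
  have := iso_dist_le φ.symm (φ u) (φ v)
  simpa using this

lemma iso_pdist (φ : G ≃g H) (v : V) (S : Set V) : pDist H (φ v) (φ.toEquiv '' S) = pDist G v S := by
  unfold pDist
  congr 1
  rw [Set.image_image]
  exact Set.image_congr fun z _ => iso_dist φ v z

lemma iso_resolvingSet (φ : G ≃g H) {S : Set V} (hS : IsResolvingSet G S) :
    IsResolvingSet H (φ.toEquiv '' S) := by
  intro u' v' hne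
  obtain ⟨u, rfl⟩ := φ.toEquiv.surjective u'
  obtain ⟨v, rfl⟩ := φ.toEquiv.surjective v'
  obtain ⟨x, hx, hd⟩ := hS u v (fun he => hne (by rw [he]))
  refine ⟨φ.toEquiv x, ⟨x, hx, rfl⟩, ?_⟩
  rw [show (φ.toEquiv u) = φ u from rfl, show (φ.toEquiv v) = φ v from rfl,
    show (φ.toEquiv x) = φ x from rfl, iso_dist φ u x, iso_dist φ v x]
  exact hd

lemma iso_dominatingSet (φ : G ≃g H) {S : Set V} (hS : IsDominatingSet G S) :
    IsDominatingSet H (φ.toEquiv '' S) := by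
  intro v' hv'
  obtain ⟨v, rfl⟩ := φ.toEquiv.surjective v'
  have hv : v ∉ S := fun hv => hv' ⟨v, hv, rfl⟩
  obtain ⟨u, hu, hadj⟩ := hS v hv
  exact ⟨φ.toEquiv u, ⟨u, hu, rfl⟩, φ.map_adj_iff.mpr hadj⟩

lemma iso_etaNum (φ : G ≃g H) : etaNum H = etaNum G := by
  unfold etaNum
  congr 1
  ext m
  constructor
  · rintro ⟨S, h1, h2, rfl⟩
    exact ⟨φ.symm.toEquiv '' S, iso_resolvingSet φ.symm h1, iso_dominatingSet φ.symm h2,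
      (Set.ncard_image_of_injective _ φ.symm.toEquiv.injective)⟩
  · rintro ⟨S, h1, h2, rfl⟩
    exact ⟨φ.toEquiv '' S, iso_resolvingSet φ h1, iso_dominatingSet φ h2,
      (Set.ncard_image_of_injective _ φ.toEquiv.injective)⟩

lemma iso_partition (φ : G ≃g H) {P : Set (Set V)} (hP : Setoid.IsPartition P) :
    Setoid.IsPartition ((Set.image φ.toEquiv) '' P) := by
  constructor
  · rintro ⟨S, hS, he⟩
    exact hP.1 ((Set.image_eq_empty.mp he) ▸ hS)
  · intro x'
    obtain ⟨x, rfl⟩ := φ.toEquiv.surjective x'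
    obtain ⟨S, ⟨hS, hx⟩, hu⟩ := hP.2 x
    refine ⟨φ.toEquiv '' S, ⟨⟨S, hS, rfl⟩, ⟨x, hx, rfl⟩⟩, ?_⟩
    rintro _ ⟨⟨S0, hS0, rfl⟩, ⟨y, hy, hyx⟩⟩
    have hxy : y = x := φ.toEquiv.injective hyx
    subst hxy
    rw [hu S0 ⟨hS0, hy⟩]

lemma iso_resolvingFam (φ : G ≃g H) {P : Set (Set V)} (hP : IsResolvingFam G P) :
    IsResolvingFam H ((Set.image φ.toEquiv) '' P) := by
  intro u' v' hne
  obtain ⟨u, rfl⟩ := φ.toEquiv.surjective u'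
  obtain ⟨v, rfl⟩ := φ.toEquiv.surjective v'
  obtain ⟨S, hS, hd⟩ := hP u v (fun he => hne (by rw [he]))
  refine ⟨φ.toEquiv '' S, ⟨S, hS, rfl⟩, ?_⟩
  rw [show (φ.toEquiv u) = φ u from rfl, show (φ.toEquiv v) = φ v from rfl,
    iso_pdist φ u S, iso_pdist φ v S]
  exact hd

lemma iso_dominatingFam (φ : G ≃g H) {P : Set (Set V)} (hP : IsDominatingFam G P) :
    IsDominatingFam H ((Set.image φ.toEquiv) '' P) := by
  intro v'
  obtain ⟨v, rfl⟩ := φ.toEquiv.surjective v'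
  obtain ⟨S, hS, hd⟩ := hP v
  refine ⟨φ.toEquiv '' S, ⟨S, hS, rfl⟩, ?_⟩
  rw [show (φ.toEquiv v) = φ v from rfl, iso_pdist φ v S]
  exact hd

lemma iso_etaP (φ : G ≃g H) : etaP H = etaP G := by
  unfold etaP
  congr 1
  ext m
  constructor
  · rintro ⟨P, h1, h2, h3, rfl⟩
    exact ⟨(Set.image φ.symm.toEquiv) '' P, iso_partition φ.symm h1, iso_resolvingFam φ.symm h2,
      iso_dominatingFam φ.symm h3,
      Set.ncard_image_of_injective _ (Set.image_injective.mpr φ.symm.toEquiv.injective)⟩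
  · rintro ⟨P, h1, h2, h3, rfl⟩
    exact ⟨(Set.image φ.toEquiv) '' P, iso_partition φ h1, iso_resolvingFam φ h2,
      iso_dominatingFam φ h3,
      Set.ncard_image_of_injective _ (Set.image_injective.mpr φ.toEquiv.injective)⟩

lemma iso_connected (φ : G ≃g H) (hG : G.Connected) : H.Connected := by
  rw [connected_iff_exists_forall_reachable] at hG ⊢
  obtain ⟨v, hv⟩ := hG
  refine ⟨φ v, fun w' => ?_⟩
  obtain ⟨w, rfl⟩ := φ.toEquiv.surjective w'
  exact (hv w).map φ.toHom

end Transport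
theorem stmt_8 (a b : ℕ) (ha : 3 ≤ a) (hab : a ≤ b + 1) :
    ∃ (n : ℕ) (G : SimpleGraph (Fin n)), G.Connected ∧ etaP G = a ∧ etaNum G = b := by
  set k : ℕ := b + 2 - a with hkdef
  set h : ℕ := a - 2 with hhdef
  have hk : 0 < k := by omega
  have hh : 0 < h := by omega
  let e : Cat.Vt k h ≃ Fin (k + (k + h)) :=
    (Equiv.sumCongr (Equiv.refl (Fin k)) finSumFinEquiv).trans finSumFinEquiv
  let H : SimpleGraph (Fin (k + (k + h))) := (Cat.G k h).comap ⇑e.symm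
  let φ : Cat.G k h ≃g H :=
    { toEquiv := e, map_rel_iff' := by intro u v; simp [H, SimpleGraph.comap] }
  refine ⟨k + (k + h), H, ?_, ?_, ?_⟩
  · exact iso_connected φ (Cat.connected hk)
  · rw [iso_etaP φ, Cat.etaP_eq hk hh]
    omega
  · rw [iso_etaNum φ, Cat.etaNum_eq hk]
    omega
end
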